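/- arXiv:2407.04602 — 3 statements merged into one kernel-verified Lean document; each statement's English description precedes it below -/
import Mathlib

section
/- Let z̄ = (x̄, ȳ^1, …, ȳ^N) ∈ S be a minimizer of the recourse problem (RP). Then for every i ∈ {1,…,N}, ȳ^i is a minimizer of the second-stage problem RP₂(x̄, i): ȳ^i is feasible for RP₂(x̄, i) (i.e., W_i ȳ^i = u^i − T_i x̄ and ȳ^i ≥ 0) and there is no y ∈ ℝ^m with W_i y = u^i − T_i x̄, y ≥ 0, Q_i y ≤ Q_i ȳ^i componentwise and Q_i y ≠ Q_i ȳ^i. -/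
open Pointwise
open Matrix

/-!
Replacing the `i`-th recourse decision `ȳⁱ` of a feasible point by any `y` that is feasible for
RP₂(x̄, i) keeps the first-stage constraints and all other scenarios untouched, so the result is
again feasible for (RP). Its objective value differs from `P z̄` only in the `i`-th summand, which
changes by `pᵢ (Qᵢ y - Qᵢ ȳⁱ)`; since `pᵢ > 0`, a point `y` dominating `ȳⁱ` in RP₂(x̄, i) would
make `P z̄` dominated in the upper image.
-/

section Recourse

variable {n m k l N : ℕ} (A : Matrix (Fin k) (Fin n) ℝ) (b : Fin k → ℝ)
  (T : Fin N → Matrix (Fin l) (Fin n) ℝ) (W : Fin N → Matrix (Fin l) (Fin m) ℝ)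
  (u : Fin N → Fin l → ℝ)

def IsRecourseFeasible (x : Fin n → ℝ) (y : Fin N → Fin m → ℝ) : Prop :=
  A *ᵥ x = b ∧ (∀ i, T i *ᵥ x + W i *ᵥ y i = u i) ∧ 0 ≤ x ∧ ∀ i, 0 ≤ y i

variable {A b T W u}

theorem IsRecourseFeasible.update {x : Fin n → ℝ} {y : Fin N → Fin m → ℝ}
    (h : IsRecourseFeasible A b T W u x y) {i : Fin N} {y' : Fin m → ℝ}
    (hW : W i *ᵥ y' = u i - T i *ᵥ x) (hy' : 0 ≤ y') :
    IsRecourseFeasible A b T W u x (Function.update y i y') := by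
  obtain ⟨hA, hTW, hx, hy⟩ := h
  refine ⟨hA, fun j => ?_, hx, fun j => ?_⟩
  · rcases eq_or_ne j i with rfl | hj
    · rw [Function.update_self, hW, add_sub_cancel]
    · rw [Function.update_of_ne hj]
      exact hTW j
  · rcases eq_or_ne j i with rfl | hj
    · rwa [Function.update_self]
    · rw [Function.update_of_ne hj]
      exact hy j

end Recourse

theorem Finset.sum_update_lt {ι M : Type*} [Fintype ι] [DecidableEq ι] [AddCommMonoid M]
    [PartialOrder M] [IsOrderedCancelAddMonoid M] {f : ι → M} {i : ι} {a : M} (ha : a < f i) :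
    ∑ j, Function.update f i a j < ∑ j, f j := by
  refine Finset.sum_lt_sum (fun j _ => ?_) ⟨i, Finset.mem_univ i, by rwa [Function.update_self]⟩
  rcases eq_or_ne j i with rfl | hj
  · rw [Function.update_self]
    exact ha.le
  · rw [Function.update_of_ne hj]

theorem weighted_sum_mulVec_update_lt {m d N : ℕ} {Q : Fin N → Matrix (Fin d) (Fin m) ℝ}
    {p : Fin N → ℝ} {y : Fin N → Fin m → ℝ} {i : Fin N} {y' : Fin m → ℝ} (hp : 0 < p i)
    (hy' : Q i *ᵥ y' < Q i *ᵥ y i) :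
    ∑ j, p j • Q j *ᵥ Function.update y i y' j < ∑ j, p j • Q j *ᵥ y j := by
  have hupdate : (fun j => p j • Q j *ᵥ Function.update y i y' j) =
      Function.update (fun j => p j • Q j *ᵥ y j) i (p i • Q i *ᵥ y') := by
    ext1 j
    rcases eq_or_ne j i with rfl | hj
    · simp only [Function.update_self]
    · simp only [Function.update_of_ne hj]
  rw [hupdate]
  exact Finset.sum_update_lt (smul_lt_smul_of_pos_left hy' hp)

theorem stmt_7_general {n m d k l N : ℕ}
    (C : Matrix (Fin d) (Fin n) ℝ) (A : Matrix (Fin k) (Fin n) ℝ) (b : Fin k → ℝ)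
    (Q : Fin N → Matrix (Fin d) (Fin m) ℝ) (T : Fin N → Matrix (Fin l) (Fin n) ℝ)
    (W : Fin N → Matrix (Fin l) (Fin m) ℝ) (u : Fin N → Fin l → ℝ)
    (p : Fin N → ℝ) (hp : ∀ i, 0 < p i)
    (xbar : Fin n → ℝ) (ybar : Fin N → Fin m → ℝ)
    -- z̄ is feasible for (RP)
    (hfeas : A.mulVec xbar = b ∧
      (∀ i, (T i).mulVec xbar + (W i).mulVec (ybar i) = u i) ∧
      0 ≤ xbar ∧ ∀ i, 0 ≤ ybar i)
    -- P z̄ is a minimal point of the upper image 𝒫^{RP} = {P z | z ∈ S} + ℝ^d₊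
    (hmin : ¬ ∃ v ∈ ({w | ∃ (x : Fin n → ℝ) (y : Fin N → Fin m → ℝ),
          (A.mulVec x = b ∧ (∀ i, (T i).mulVec x + (W i).mulVec (y i) = u i) ∧
            0 ≤ x ∧ (∀ i, 0 ≤ y i)) ∧
          w = C.mulVec x + ∑ i, p i • (Q i).mulVec (y i)} +
        {w : Fin d → ℝ | 0 ≤ w}),
      v ≤ C.mulVec xbar + ∑ i, p i • (Q i).mulVec (ybar i) ∧
        v ≠ C.mulVec xbar + ∑ i, p i • (Q i).mulVec (ybar i)) :
    ∀ i, ((W i).mulVec (ybar i) = u i - (T i).mulVec xbar ∧ 0 ≤ ybar i) ∧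
      ¬ ∃ y : Fin m → ℝ, (W i).mulVec y = u i - (T i).mulVec xbar ∧ 0 ≤ y ∧
        (Q i).mulVec y ≤ (Q i).mulVec (ybar i) ∧
        (Q i).mulVec y ≠ (Q i).mulVec (ybar i) := by
  intro i
  refine ⟨⟨eq_sub_of_add_eq' (hfeas.2.1 i), hfeas.2.2.2 i⟩, ?_⟩
  rintro ⟨y, hW, hy, hle, hne⟩
  have hfeas' : IsRecourseFeasible A b T W u xbar (Function.update ybar i y) :=
    IsRecourseFeasible.update hfeas hW hy
  have hlt : C *ᵥ xbar + ∑ j, p j • Q j *ᵥ Function.update ybar i y j <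
      C *ᵥ xbar + ∑ j, p j • Q j *ᵥ ybar j :=
    add_lt_add_right (weighted_sum_mulVec_update_lt (hp i) (lt_of_le_of_ne hle hne)) _
  exact hmin ⟨_, Set.subset_add_left _ (le_refl 0) ⟨xbar, _, hfeas', rfl⟩, hlt.le, hlt.ne⟩

/-- If `z̄ = (x̄, ȳ¹, …, ȳᴺ)` is a minimizer of the recourse problem (RP), then each `ȳⁱ`
is a minimizer of the second-stage problem RP₂(x̄, i). -/
theorem stmt_7 {n m d k l N : ℕ}
    (hn : 0 < n) (hm : 0 < m) (hd : 0 < d) (hk : 0 < k) (hl : 0 < l) (hN : 0 < N)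
    (C : Matrix (Fin d) (Fin n) ℝ) (A : Matrix (Fin k) (Fin n) ℝ) (b : Fin k → ℝ)
    (Q : Fin N → Matrix (Fin d) (Fin m) ℝ) (T : Fin N → Matrix (Fin l) (Fin n) ℝ)
    (W : Fin N → Matrix (Fin l) (Fin m) ℝ) (u : Fin N → Fin l → ℝ)
    (p : Fin N → ℝ) (hp : ∀ i, 0 < p i) (hpsum : ∑ i, p i = 1)
    (xbar : Fin n → ℝ) (ybar : Fin N → Fin m → ℝ)
    -- z̄ is feasible for (RP)
    (hfeas : A.mulVec xbar = b ∧
      (∀ i, (T i).mulVec xbar + (W i).mulVec (ybar i) = u i) ∧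
      0 ≤ xbar ∧ ∀ i, 0 ≤ ybar i)
    -- P z̄ is a minimal point of the upper image 𝒫^{RP} = {P z | z ∈ S} + ℝ^d₊
    (hmin : ¬ ∃ v ∈ ({w | ∃ (x : Fin n → ℝ) (y : Fin N → Fin m → ℝ),
          (A.mulVec x = b ∧ (∀ i, (T i).mulVec x + (W i).mulVec (y i) = u i) ∧
            0 ≤ x ∧ (∀ i, 0 ≤ y i)) ∧
          w = C.mulVec x + ∑ i, p i • (Q i).mulVec (y i)} +
        {w : Fin d → ℝ | 0 ≤ w}),
      v ≤ C.mulVec xbar + ∑ i, p i • (Q i).mulVec (ybar i) ∧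
        v ≠ C.mulVec xbar + ∑ i, p i • (Q i).mulVec (ybar i)) :
    ∀ i, ((W i).mulVec (ybar i) = u i - (T i).mulVec xbar ∧ 0 ≤ ybar i) ∧
      ¬ ∃ y : Fin m → ℝ, (W i).mulVec y = u i - (T i).mulVec xbar ∧ 0 ≤ y ∧
        (Q i).mulVec y ≤ (Q i).mulVec (ybar i) ∧
        (Q i).mulVec y ≠ (Q i).mulVec (ybar i) :=
  stmt_7_general C A b Q T W u p hp xbar ybar hfeas hmin
end

section
/- For every x ∈ ℝ^n with Ax = b and x ≥ 0, the set F(x) equals the expectation of the random upper images of the second-stage problems: F(x) = Σ_{i=1}^N p_i · 𝒫(x, i), where 𝒫(x, i) = {Cx + Q_i y | y ∈ ℝ^m, W_i y = u^i − T_i x, y ≥ 0} + ℝ^d₊ is the upper image of the second-stage problem RP₂(x, i) and the right-hand side is a Minkowski sum of scaled sets. -/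
/-!
Scaling distributes over Minkowski sums, so the right-hand side splits into
`∑ i, p i • 𝒫ᵢ` plus `∑ i, p i • ℝᵈ₊`. The latter is `ℝᵈ₊` again, as for any convex set and
weights summing to one. The former is the image of the product of the second-stage feasible
sets under `y ↦ ∑ i, p i • (C x + Q i y i) = C x + ∑ i, p i • Q i y i`, which is the
first-stage objective.
-/

open Pointwise

theorem Set.sum_image_eq_image_pi {ι α E : Type*} [Fintype ι] [AddCommMonoid E]
    (g : ι → α → E) (Y : ι → Set α) :
    ∑ i, g i '' Y i = (fun y => ∑ i, g i (y i)) '' Set.univ.pi Y := by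
  rw [← Set.image_fintype_sum_pi, ← Set.piMap_image_univ_pi, Set.image_image]
  rfl

section Convex

variable {𝕜 E ι : Type*} [Field 𝕜] [LinearOrder 𝕜] [IsStrictOrderedRing 𝕜]
  [AddCommGroup E] [Module 𝕜 E] {s : Set E}

theorem Convex.finsetSum_smul (hs : Convex 𝕜 s) {t : Finset ι} (ht : t.Nonempty) {w : ι → 𝕜}
    (hw : ∀ i ∈ t, 0 ≤ w i) : (∑ i ∈ t, w i) • s = ∑ i ∈ t, w i • s := by
  induction ht using Finset.Nonempty.cons_induction with
  | singleton i => simp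
  | cons i t hi ht ih =>
    rw [Finset.sum_cons, Finset.sum_cons, hs.add_smul (hw i (Finset.mem_cons_self i t))
      (Finset.sum_nonneg fun j hj => hw j (Finset.mem_cons_of_mem hj)),
      ih fun j hj => hw j (Finset.mem_cons_of_mem hj)]

theorem Convex.sum_smul_eq_self [Fintype ι] (hs : Convex 𝕜 s) {w : ι → 𝕜} (hw : ∀ i, 0 ≤ w i)
    (hw₁ : ∑ i, w i = 1) : ∑ i, w i • s = s := by
  have hι : (Finset.univ : Finset ι).Nonempty :=
    Finset.nonempty_of_sum_ne_zero (hw₁ ▸ one_ne_zero)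
  rw [← hs.finsetSum_smul hι fun i _ => hw i, hw₁, one_smul]

end Convex

theorem stmt_8_general {n m d l N : ℕ}
    (C : Matrix (Fin d) (Fin n) ℝ)
    (Q : Fin N → Matrix (Fin d) (Fin m) ℝ) (T : Fin N → Matrix (Fin l) (Fin n) ℝ)
    (W : Fin N → Matrix (Fin l) (Fin m) ℝ) (u : Fin N → Fin l → ℝ)
    (p : Fin N → ℝ) (hp : ∀ i, 0 < p i) (hpsum : ∑ i, p i = 1)
    (x : Fin n → ℝ) :
    ({w | ∃ y : Fin N → Fin m → ℝ,
        (∀ i, (T i).mulVec x + (W i).mulVec (y i) = u i) ∧ (∀ i, 0 ≤ y i) ∧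
        w = C.mulVec x + ∑ i, p i • (Q i).mulVec (y i)} + {w : Fin d → ℝ | 0 ≤ w}) =
    ∑ i, p i • ({w | ∃ y : Fin m → ℝ, (W i).mulVec y = u i - (T i).mulVec x ∧ 0 ≤ y ∧
        w = C.mulVec x + (Q i).mulVec y} + {w : Fin d → ℝ | 0 ≤ w}) := by
  have hK : Convex ℝ {w : Fin d → ℝ | 0 ≤ w} := convex_Ici 0
  have second_stage_eq_image (i : Fin N) :
      {w | ∃ y : Fin m → ℝ, (W i).mulVec y = u i - (T i).mulVec x ∧ 0 ≤ y ∧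
        w = C.mulVec x + (Q i).mulVec y} =
      (fun y => C.mulVec x + (Q i).mulVec y) ''
        {y | (W i).mulVec y = u i - (T i).mulVec x ∧ 0 ≤ y} := by
    ext w
    simp [eq_comm, and_assoc]
  have average (y : Fin N → Fin m → ℝ) :
      ∑ i, p i • (C.mulVec x + (Q i).mulVec (y i)) =
        C.mulVec x + ∑ i, p i • (Q i).mulVec (y i) := by
    simp only [smul_add, Finset.sum_add_distrib, ← Finset.sum_smul, hpsum, one_smul]
  simp_rw [second_stage_eq_image, smul_add, Finset.sum_add_distrib,
    hK.sum_smul_eq_self (fun i => (hp i).le) hpsum, ← Set.image_smul, Set.image_image,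
    Set.sum_image_eq_image_pi, average]
  congr 1
  ext w
  simp [eq_sub_iff_add_eq', forall_and, eq_comm, and_assoc]

/-- For every feasible first-stage decision `x`, `F(x)` is the expectation of the random
upper images of the second-stage problems: `F(x) = Σ p_i • 𝒫(x, i)`. -/
theorem stmt_8 {n m d k l N : ℕ}
    (hn : 0 < n) (hm : 0 < m) (hd : 0 < d) (hk : 0 < k) (hl : 0 < l) (hN : 0 < N)
    (C : Matrix (Fin d) (Fin n) ℝ) (A : Matrix (Fin k) (Fin n) ℝ) (b : Fin k → ℝ)
    (Q : Fin N → Matrix (Fin d) (Fin m) ℝ) (T : Fin N → Matrix (Fin l) (Fin n) ℝ)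
    (W : Fin N → Matrix (Fin l) (Fin m) ℝ) (u : Fin N → Fin l → ℝ)
    (p : Fin N → ℝ) (hp : ∀ i, 0 < p i) (hpsum : ∑ i, p i = 1)
    (x : Fin n → ℝ) (hxA : A.mulVec x = b) (hx0 : 0 ≤ x) :
    ({w | ∃ y : Fin N → Fin m → ℝ,
        (∀ i, (T i).mulVec x + (W i).mulVec (y i) = u i) ∧ (∀ i, 0 ≤ y i) ∧
        w = C.mulVec x + ∑ i, p i • (Q i).mulVec (y i)} + {w : Fin d → ℝ | 0 ≤ w}) =
    ∑ i, p i • ({w | ∃ y : Fin m → ℝ, (W i).mulVec y = u i - (T i).mulVec x ∧ 0 ≤ y ∧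
        w = C.mulVec x + (Q i).mulVec y} + {w : Fin d → ℝ | 0 ≤ w}) :=
  stmt_8_general C Q T W u p hp hpsum x
end

section
/- Assume the random data Q and W are deterministic, i.e., Q_i = Q and W_i = W for all i ∈ {1,…,N}. Then the upper image of the expected value problem contains the upper image of the recourse problem: 𝒫^{EV} ⊇ 𝒫^{RP}. -/
open Pointwise Matrix

/-!
Averaging the scenario recourse decisions, `ȳ = ∑ᵢ pᵢ yⁱ`, turns a feasible point `(x, y¹, …, yᴺ)`
of the recourse problem into a feasible point `(x, ȳ)` of the expected value problem with the same
objective value, because the scenario constraints are linear and `W`, `Q` do not depend on the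
scenario. Adding the ordering cone to both images preserves the inclusion.
-/

theorem Matrix.weightedSum_mulVec_add_mulVec_weightedSum {ι l m n R : Type*} [Fintype ι]
    [Fintype m] [Fintype n] [CommSemiring R] (T : ι → Matrix l n R) (W : Matrix l m R)
    (p : ι → R) (x : n → R) (y : ι → m → R) :
    (∑ i, p i • T i) *ᵥ x + W *ᵥ ∑ i, p i • y i = ∑ i, p i • (T i *ᵥ x + W *ᵥ y i) := by
  simp only [sum_mulVec, smul_mulVec, mulVec_sum, mulVec_smul, smul_add, Finset.sum_add_distrib]

theorem stmt_13_general {n m d k l N : ℕ}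
    (C : Matrix (Fin d) (Fin n) ℝ) (A : Matrix (Fin k) (Fin n) ℝ) (b : Fin k → ℝ)
    (Q : Matrix (Fin d) (Fin m) ℝ) (W : Matrix (Fin l) (Fin m) ℝ)
    (T : Fin N → Matrix (Fin l) (Fin n) ℝ) (u : Fin N → Fin l → ℝ)
    (p : Fin N → ℝ) (hp : ∀ i, 0 < p i) :
    ({w | ∃ (x : Fin n → ℝ) (y : Fin m → ℝ),
        A.mulVec x = b ∧ (∑ i, p i • T i).mulVec x + W.mulVec y = ∑ i, p i • u i ∧
        0 ≤ x ∧ 0 ≤ y ∧ w = C.mulVec x + Q.mulVec y} + {w : Fin d → ℝ | 0 ≤ w}) ⊇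
    ({w | ∃ (x : Fin n → ℝ) (y : Fin N → Fin m → ℝ),
        A.mulVec x = b ∧ (∀ i, (T i).mulVec x + W.mulVec (y i) = u i) ∧
        0 ≤ x ∧ (∀ i, 0 ≤ y i) ∧
        w = C.mulVec x + ∑ i, p i • Q.mulVec (y i)} + {w : Fin d → ℝ | 0 ≤ w}) := by
  refine Set.add_subset_add_right ?_
  rintro _ ⟨x, y, hAx, hscenario, hx, hy, rfl⟩
  refine ⟨x, ∑ i, p i • y i, hAx, ?_, hx, ?_, ?_⟩
  · simp only [weightedSum_mulVec_add_mulVec_weightedSum, hscenario]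
  · exact Finset.sum_nonneg fun i _ => smul_nonneg (hp i).le (hy i)
  · simp only [mulVec_sum, mulVec_smul]

/-- If `Q` and `W` are deterministic, the upper image of the expected value problem contains
the upper image of the recourse problem: `𝒫^{EV} ⊇ 𝒫^{RP}`. -/
theorem stmt_13 {n m d k l N : ℕ}
    (hn : 0 < n) (hm : 0 < m) (hd : 0 < d) (hk : 0 < k) (hl : 0 < l) (hN : 0 < N)
    (C : Matrix (Fin d) (Fin n) ℝ) (A : Matrix (Fin k) (Fin n) ℝ) (b : Fin k → ℝ)
    (Q : Matrix (Fin d) (Fin m) ℝ) (W : Matrix (Fin l) (Fin m) ℝ)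
    (T : Fin N → Matrix (Fin l) (Fin n) ℝ) (u : Fin N → Fin l → ℝ)
    (p : Fin N → ℝ) (hp : ∀ i, 0 < p i) (hpsum : ∑ i, p i = 1) :
    ({w | ∃ (x : Fin n → ℝ) (y : Fin m → ℝ),
        A.mulVec x = b ∧ (∑ i, p i • T i).mulVec x + W.mulVec y = ∑ i, p i • u i ∧
        0 ≤ x ∧ 0 ≤ y ∧ w = C.mulVec x + Q.mulVec y} + {w : Fin d → ℝ | 0 ≤ w}) ⊇
    ({w | ∃ (x : Fin n → ℝ) (y : Fin N → Fin m → ℝ),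
        A.mulVec x = b ∧ (∀ i, (T i).mulVec x + W.mulVec (y i) = u i) ∧
        0 ≤ x ∧ (∀ i, 0 ≤ y i) ∧
        w = C.mulVec x + ∑ i, p i • Q.mulVec (y i)} + {w : Fin d → ℝ | 0 ≤ w}) :=
  stmt_13_general C A b Q W T u p hp
end
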